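/- Outcome-bridge dose-response consistency (Theorem, consistency appendix): Suppose φ₀ : 𝒜×𝒳×𝒵 → ℝ satisfies the ν-reweighting condition and let h : 𝒜×𝒳×𝒲 → ℝ be measurable, with Y, φ₀(A,X,Z), and h(A,X,W) square-integrable under P. Define F := E[Y·φ₀(A,X,Z) | σ(A)], M_h(ω) := ∫ h(A(ω),x,w) dν(x,w), and D := E[Y − h(A,X,W) | σ(A,X,Z)]. If there is a constant C_φ ≥ 0 with E[φ₀(A,X,Z)² | σ(A)] ≤ C_φ² P-almost surely, then E[(F − M_h)²] ≤ C_φ² · E[D²]; that is, the squared L²(P) distance between the treatment-bridge dose-response F and the outcome-bridge plug-in M_h is at most C_φ² times the squared L²(P) norm of the projected outcome-bridge residual. -/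

import Mathlib

open MeasureTheory

lemma integrable_mul_of_memL2 {α : Type*} {m0 : MeasurableSpace α} {μ : Measure α}
    {f g : α → ℝ} (hf : MemLp f 2 μ) (hg : MemLp g 2 μ) :
    Integrable (fun x => f x * g x) μ := by
  have h : MemLp (g • f) 1 μ := hf.smul hg
  have he : (fun x => f x * g x) = g • f := by funext x; simp [mul_comm]
  rw [← memLp_one_iff_integrable, he]; exact h

lemma condexp_cauchy_schwarz {α : Type*} {m m0 : MeasurableSpace α} {μ : Measure α}
    [IsFiniteMeasure μ] {f g : α → ℝ}
    (hf2 : Integrable (fun x => f x ^ 2) μ) (hg2 : Integrable (fun x => g x ^ 2) μ)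
    (hfg : Integrable (fun x => f x * g x) μ) :
    ∀ᵐ x ∂μ, ((μ[fun x => f x * g x|m]) x) ^ 2 ≤
      (μ[fun x => f x ^ 2|m]) x * (μ[fun x => g x ^ 2|m]) x := by
  have key : ∀ t : ℝ, ∀ᵐ x ∂μ,
      0 ≤ t ^ 2 * (μ[fun x => f x ^ 2|m]) x + 2 * t * (μ[fun x => f x * g x|m]) x
        + (μ[fun x => g x ^ 2|m]) x := by
    intro t
    have hnn : ∀ᵐ x ∂μ, 0 ≤ (μ[fun x => (t * f x + g x) ^ 2|m]) x :=
      condExp_nonneg (ae_of_all _ fun x => sq_nonneg _)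
    have hi1 : Integrable (fun x => t ^ 2 * f x ^ 2) μ := hf2.const_mul _
    have hi2 : Integrable (fun x => 2 * t * (f x * g x)) μ := hfg.const_mul _
    have hexp : (fun x => (t * f x + g x) ^ 2)
        = (fun x => t ^ 2 * f x ^ 2) + ((fun x => 2 * t * (f x * g x)) + fun x => g x ^ 2) := by
      funext x; simp only [Pi.add_apply]; ring
    have h1 : μ[fun x => (t * f x + g x) ^ 2|m]
        =ᵐ[μ] μ[fun x => t ^ 2 * f x ^ 2|m]
          + μ[(fun x => 2 * t * (f x * g x)) + fun x => g x ^ 2|m] := by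
      rw [hexp]; exact condExp_add hi1 (hi2.add hg2) m
    have h2 : μ[(fun x => 2 * t * (f x * g x)) + fun x => g x ^ 2|m]
        =ᵐ[μ] μ[fun x => 2 * t * (f x * g x)|m] + μ[fun x => g x ^ 2|m] := condExp_add hi2 hg2 m
    have h3 : μ[fun x => t ^ 2 * f x ^ 2|m] =ᵐ[μ] fun x => t ^ 2 * (μ[fun x => f x ^ 2|m]) x := by
      have := condExp_smul (μ := μ) (m := m) (t ^ 2) (fun x => f x ^ 2)
      rw [show (fun x => t ^ 2 * f x ^ 2) = (t ^ 2) • (fun x => f x ^ 2) from by funext x; simp]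
      filter_upwards [this] with x hx
      simp [hx]
    have h4 : μ[fun x => 2 * t * (f x * g x)|m]
        =ᵐ[μ] fun x => 2 * t * (μ[fun x => f x * g x|m]) x := by
      have := condExp_smul (μ := μ) (m := m) (2 * t) (fun x => f x * g x)
      rw [show (fun x => 2 * t * (f x * g x)) = (2 * t) • (fun x => f x * g x) from by funext x; simp]
      filter_upwards [this] with x hx
      simp [hx]
    filter_upwards [hnn, h1, h2, h3, h4] with x hx e1 e2 e3 e4
    have hh := hx
    rw [e1] at hh
    simp only [Pi.add_apply] at hh e2
    rw [e2, e3, e4] at hh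
    linarith
  have hkey : ∀ᵐ x ∂μ, ∀ q : ℚ,
      0 ≤ (q : ℝ) ^ 2 * (μ[fun x => f x ^ 2|m]) x + 2 * q * (μ[fun x => f x * g x|m]) x
        + (μ[fun x => g x ^ 2|m]) x := ae_all_iff.mpr fun q => key q
  filter_upwards [hkey] with x hx
  set a := (μ[fun x => f x ^ 2|m]) x
  set b := (μ[fun x => f x * g x|m]) x
  set c := (μ[fun x => g x ^ 2|m]) x
  have hall : ∀ t : ℝ, 0 ≤ a * (t * t) + (2 * b) * t + c := by
    intro t
    have hclosed : IsClosed {t : ℝ | 0 ≤ a * (t * t) + (2 * b) * t + c} :=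
      isClosed_le continuous_const (by continuity)
    have hsub : Set.range ((↑) : ℚ → ℝ) ⊆ {t : ℝ | 0 ≤ a * (t * t) + (2 * b) * t + c} := by
      rintro _ ⟨q, rfl⟩
      simp only [Set.mem_setOf_eq]
      nlinarith [hx q]
    have h5 : closure (Set.range ((↑) : ℚ → ℝ)) ⊆ {t : ℝ | 0 ≤ a * (t * t) + (2 * b) * t + c} :=
      closure_minimal hsub hclosed
    rw [Rat.denseRange_cast.closure_range] at h5
    exact h5 (Set.mem_univ t)
  have hd := discrim_le_zero hall
  rw [discrim] at hd
  nlinarith [hd]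

/-- Outcome-bridge dose-response consistency: squared L² bound. -/
theorem outcome_bridge_dose_response_consistency
    {Ω 𝓐 𝓧 𝓩 𝓦 : Type*}
    [MeasurableSpace Ω] [MeasurableSpace 𝓐] [MeasurableSpace 𝓧]
    [MeasurableSpace 𝓩] [MeasurableSpace 𝓦]
    (P : Measure Ω) [IsProbabilityMeasure P]
    (A : Ω → 𝓐) (X : Ω → 𝓧) (Z : Ω → 𝓩) (W : Ω → 𝓦) (Y : Ω → ℝ)
    (hA : Measurable A) (hX : Measurable X) (hZ : Measurable Z)
    (hW : Measurable W) (hY : Measurable Y)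
    (phi0 : 𝓐 × 𝓧 × 𝓩 → ℝ) (h : 𝓐 × 𝓧 × 𝓦 → ℝ)
    (hphi0 : Measurable phi0) (hh : Measurable h)
    (hY2 : MemLp Y 2 P)
    (hphi02 : MemLp (fun ω => phi0 (A ω, X ω, Z ω)) 2 P)
    (hh2 : MemLp (fun ω => h (A ω, X ω, W ω)) 2 P)
    -- ν-reweighting condition, ν the law of (X, W)
    (hreweight : ∀ q : 𝓐 × 𝓧 × 𝓦 → ℝ, Measurable q →
      Integrable (fun ω => q (A ω, X ω, W ω)) P →
      Integrable (fun ω => phi0 (A ω, X ω, Z ω) * q (A ω, X ω, W ω)) P →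
      P[(fun ω => phi0 (A ω, X ω, Z ω) * q (A ω, X ω, W ω)) |
        MeasurableSpace.comap A inferInstance]
        =ᵐ[P]
      fun ω => ∫ p, q (A ω, p) ∂(Measure.map (fun ω' => (X ω', W ω')) P))
    (Cphi : ℝ) (hCphi : 0 ≤ Cphi)
    (hcond : ∀ᵐ ω ∂P,
      (P[(fun ω' => (phi0 (A ω', X ω', Z ω')) ^ 2) |
        MeasurableSpace.comap A inferInstance]) ω ≤ Cphi ^ 2) :
    (∫ ω,
      ((P[(fun ω' => Y ω' * phi0 (A ω', X ω', Z ω')) |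
          MeasurableSpace.comap A inferInstance]) ω
        - ∫ p, h (A ω, p) ∂(Measure.map (fun ω' => (X ω', W ω')) P)) ^ 2 ∂P)
      ≤
    Cphi ^ 2 *
      ∫ ω, ((P[(fun ω' => Y ω' - h (A ω', X ω', W ω')) |
        MeasurableSpace.comap (fun ω' => (A ω', X ω', Z ω')) inferInstance]) ω) ^ 2 ∂P := by
  have hm : (MeasurableSpace.comap A inferInstance) ≤ (inferInstance : MeasurableSpace Ω) := hA.comap_le
  have hT : Measurable (fun ω' => (A ω', X ω', Z ω')) := hA.prodMk (hX.prodMk hZ)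
  have hm' : (MeasurableSpace.comap (fun ω' => (A ω', X ω', Z ω')) inferInstance) ≤ (inferInstance : MeasurableSpace Ω) := hT.comap_le
  have hmm' : (MeasurableSpace.comap A inferInstance) ≤ (MeasurableSpace.comap (fun ω' => (A ω', X ω', Z ω')) inferInstance) := by
    have h1 : MeasurableSpace.comap A (inferInstance : MeasurableSpace 𝓐)
        = MeasurableSpace.comap (fun ω' => (A ω', X ω', Z ω'))
            (MeasurableSpace.comap Prod.fst inferInstance) :=
      (MeasurableSpace.comap_comp
        (f := Prod.fst) (g := fun ω' => (A ω', X ω', Z ω'))).symm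
    rw [h1]
    exact MeasurableSpace.comap_mono measurable_fst.comap_le
  haveI : IsFiniteMeasure (P.trim hm) := isFiniteMeasure_trim hm
  haveI : IsFiniteMeasure (P.trim hm') := isFiniteMeasure_trim hm'
  have hhint : Integrable (fun ω => h (A ω, X ω, W ω)) P := hh2.integrable one_le_two
  have hf02 : MemLp (fun ω => Y ω - h (A ω, X ω, W ω)) 2 P := hY2.sub hh2
  have hf0int : Integrable (fun ω => Y ω - h (A ω, X ω, W ω)) P := hf02.integrable one_le_two
  have hf0sq : Integrable (fun ω => (Y ω - h (A ω, X ω, W ω)) ^ 2) P := hf02.integrable_sq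
  have hψsq : Integrable (fun ω => (phi0 (A ω, X ω, Z ω)) ^ 2) P := hphi02.integrable_sq
  have hψY : Integrable (fun ω => Y ω * phi0 (A ω, X ω, Z ω)) P :=
    integrable_mul_of_memL2 hY2 hphi02
  have hψh : Integrable (fun ω => phi0 (A ω, X ω, Z ω) * h (A ω, X ω, W ω)) P :=
    integrable_mul_of_memL2 hphi02 hh2
  have hψf0 : Integrable (fun ω => phi0 (A ω, X ω, Z ω) * (Y ω - h (A ω, X ω, W ω))) P :=
    integrable_mul_of_memL2 hphi02 hf02
  set D : Ω → ℝ := P[(fun ω' => Y ω' - h (A ω', X ω', W ω')) | (MeasurableSpace.comap (fun ω' => (A ω', X ω', Z ω')) inferInstance)] with hD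
  have hψm' : StronglyMeasurable[(MeasurableSpace.comap (fun ω' => (A ω', X ω', Z ω')) inferInstance)] (fun ω => phi0 (A ω, X ω, Z ω)) := by
    refine Measurable.stronglyMeasurable ?_
    exact hphi0.comp (measurable_iff_comap_le.mpr le_rfl)
  have hpull : P[(fun ω => phi0 (A ω, X ω, Z ω) * (Y ω - h (A ω, X ω, W ω)))|(MeasurableSpace.comap (fun ω' => (A ω', X ω', Z ω')) inferInstance)]
      =ᵐ[P] fun ω => phi0 (A ω, X ω, Z ω) * D ω := by
    exact condExp_mul_of_stronglyMeasurable_left hψm' hψf0 hf0int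
  have htower : P[(fun ω => phi0 (A ω, X ω, Z ω) * (Y ω - h (A ω, X ω, W ω)))|(MeasurableSpace.comap A inferInstance)]
      =ᵐ[P] P[(fun ω => phi0 (A ω, X ω, Z ω) * D ω)|(MeasurableSpace.comap A inferInstance)] := by
    have h1 := condExp_condExp_of_le
      (μ := P) (f := fun ω => phi0 (A ω, X ω, Z ω) * (Y ω - h (A ω, X ω, W ω))) hmm' hm'
    exact h1.symm.trans (condExp_congr_ae hpull)
  have hrw := hreweight h hh hhint hψh
  have hstep1 : P[(fun ω => phi0 (A ω, X ω, Z ω) * (Y ω - h (A ω, X ω, W ω)))|(MeasurableSpace.comap A inferInstance)]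
      =ᵐ[P] P[(fun ω => Y ω * phi0 (A ω, X ω, Z ω))|(MeasurableSpace.comap A inferInstance)]
        - P[(fun ω => phi0 (A ω, X ω, Z ω) * h (A ω, X ω, W ω))|(MeasurableSpace.comap A inferInstance)] := by
    have hc : (fun ω => phi0 (A ω, X ω, Z ω) * (Y ω - h (A ω, X ω, W ω)))
        = (fun ω => Y ω * phi0 (A ω, X ω, Z ω))
          - (fun ω => phi0 (A ω, X ω, Z ω) * h (A ω, X ω, W ω)) := by
      funext ω; simp only [Pi.sub_apply]; ring
    rw [hc]; exact condExp_sub hψY hψh _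
  have hmain : (fun ω => (P[(fun ω' => Y ω' * phi0 (A ω', X ω', Z ω'))|(MeasurableSpace.comap A inferInstance)]) ω
        - ∫ p, h (A ω, p) ∂(Measure.map (fun ω' => (X ω', W ω')) P))
      =ᵐ[P] P[(fun ω => phi0 (A ω, X ω, Z ω) * D ω)|(MeasurableSpace.comap A inferInstance)] := by
    filter_upwards [hstep1, htower, hrw] with ω h1 h2 h3
    simp only [Pi.sub_apply] at h1
    rw [← h3, ← h1]
    exact h2
  have hψDint : Integrable (fun ω => phi0 (A ω, X ω, Z ω) * D ω) P :=
    integrable_condExp.congr hpull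
  have hone : P[(fun _ : Ω => (1 : ℝ) ^ 2)|(MeasurableSpace.comap (fun ω' => (A ω', X ω', Z ω')) inferInstance)] =ᵐ[P] fun _ => (1 : ℝ) := by
    rw [show (fun _ : Ω => (1 : ℝ) ^ 2) = fun _ : Ω => (1 : ℝ) from by funext; norm_num]
    exact Filter.EventuallyEq.of_eq (condExp_const hm' (1 : ℝ))
  have hmul1 : P[(fun x => (Y x - h (A x, X x, W x)) * 1)|(MeasurableSpace.comap (fun ω' => (A ω', X ω', Z ω')) inferInstance)] =ᵐ[P] D := by
    rw [show (fun x => (Y x - h (A x, X x, W x)) * 1)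
        = fun x => Y x - h (A x, X x, W x) from by funext x; ring]
  have hDcs := condexp_cauchy_schwarz (m := (MeasurableSpace.comap (fun ω' => (A ω', X ω', Z ω')) inferInstance)) (μ := P) (f := fun ω => Y ω - h (A ω, X ω, W ω)) (g := fun _ : Ω => (1 : ℝ)) hf0sq
    (by simpa using integrable_const (μ := P) (1 : ℝ)) (by simpa using hf0int)
  have hDsq_le : ∀ᵐ ω ∂P, D ω ^ 2 ≤ (P[(fun x => (Y x - h (A x, X x, W x)) ^ 2)|(MeasurableSpace.comap (fun ω' => (A ω', X ω', Z ω')) inferInstance)]) ω := by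
    filter_upwards [hDcs, hone, hmul1] with ω h1 h2 h3
    rw [← h3]
    rw [h2, mul_one] at h1
    exact h1
  have hDsq_int : Integrable (fun ω => D ω ^ 2) P := by
    refine Integrable.mono'
      (g := P[(fun x => (Y x - h (A x, X x, W x)) ^ 2)|(MeasurableSpace.comap (fun ω' => (A ω', X ω', Z ω')) inferInstance)])
      integrable_condExp ?_ ?_
    · exact ((stronglyMeasurable_condExp.mono hm').measurable.pow_const 2).aestronglyMeasurable
    · filter_upwards [hDsq_le] with ω h1
      simpa [abs_of_nonneg (sq_nonneg (D ω))] using h1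
  have hcs2 := condexp_cauchy_schwarz (m := (MeasurableSpace.comap A inferInstance)) (μ := P) hψsq hDsq_int hψDint
  have hDnn : (0 : Ω → ℝ) ≤ᵐ[P] P[(fun ω => D ω ^ 2)|(MeasurableSpace.comap A inferInstance)] :=
    condExp_nonneg (ae_of_all _ fun ω => sq_nonneg _)
  have hfinal : ∀ᵐ ω ∂P,
      ((P[(fun ω' => Y ω' * phi0 (A ω', X ω', Z ω'))|(MeasurableSpace.comap A inferInstance)]) ω - ∫ p, h (A ω, p) ∂(Measure.map (fun ω' => (X ω', W ω')) P)) ^ 2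
        ≤ Cphi ^ 2 * (P[(fun ω => D ω ^ 2)|(MeasurableSpace.comap A inferInstance)]) ω := by
    filter_upwards [hmain, hcs2, hcond, hDnn] with ω h1 h2 h3 h4
    rw [h1]
    have h4' : (0 : ℝ) ≤ (P[(fun ω => D ω ^ 2)|(MeasurableSpace.comap A inferInstance)]) ω := h4
    nlinarith [h2, h3, h4', sq_nonneg ((P[(fun ω => phi0 (A ω, X ω, Z ω) * D ω)|(MeasurableSpace.comap A inferInstance)]) ω)]
  have hRint : Integrable (fun ω => Cphi ^ 2 * (P[(fun ω => D ω ^ 2)|(MeasurableSpace.comap A inferInstance)]) ω) P :=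
    integrable_condExp.const_mul _
  have hLint : Integrable (fun ω =>
      ((P[(fun ω' => Y ω' * phi0 (A ω', X ω', Z ω'))|(MeasurableSpace.comap A inferInstance)]) ω - ∫ p, h (A ω, p) ∂(Measure.map (fun ω' => (X ω', W ω')) P)) ^ 2) P := by
    refine Integrable.mono' hRint ?_ ?_
    · have hms : AEStronglyMeasurable
          (fun ω => ((P[(fun ω => phi0 (A ω, X ω, Z ω) * D ω)|(MeasurableSpace.comap A inferInstance)]) ω) ^ 2) P :=
        ((stronglyMeasurable_condExp.mono hm).measurable.pow_const 2).aestronglyMeasurable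
      refine hms.congr ?_
      filter_upwards [hmain] with ω hω
      rw [hω]
    · filter_upwards [hfinal] with ω h1
      rw [Real.norm_eq_abs, abs_of_nonneg (sq_nonneg _)]
      exact h1
  calc (∫ ω, ((P[(fun ω' => Y ω' * phi0 (A ω', X ω', Z ω'))|(MeasurableSpace.comap A inferInstance)]) ω
        - ∫ p, h (A ω, p) ∂(Measure.map (fun ω' => (X ω', W ω')) P)) ^ 2 ∂P)
      ≤ ∫ ω, Cphi ^ 2 * (P[(fun ω => D ω ^ 2)|(MeasurableSpace.comap A inferInstance)]) ω ∂P :=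
        integral_mono_ae hLint hRint hfinal
    _ = Cphi ^ 2 * ∫ ω, (P[(fun ω => D ω ^ 2)|(MeasurableSpace.comap A inferInstance)]) ω ∂P := integral_const_mul _ _
    _ = Cphi ^ 2 * ∫ ω, D ω ^ 2 ∂P := by rw [integral_condExp hm]
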